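/- Let α be a real number with α ≥ 1, and let F : ℂ → ℂ → ℂ be such that (z,w) ↦ F z w is analytic (jointly) on 𝔻 × 𝔻, F is Hermitian-symmetric on 𝔻 × 𝔻 (F z w = conj (F (conj w) (conj z)) for all z, w ∈ 𝔻), and F satisfies deriv (fun ζ => F ζ w) z = w² · deriv (fun ξ => F z ξ) w + α · w · F z w for all z, w ∈ 𝔻. Then F 0 0 is real and F z w = F 0 0 · (1 - z·w)^(-α) (principal-branch complex power) for all z, w ∈ 𝔻. -/

import Mathlib

open ComplexConjugate Complex Metric

/-!
Reflecting the equation through the Hermitian symmetry gives the companion equation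
`∂_w F = z² ∂_z F + α z F`. Substituting one into the other and cancelling `1 + z w ≠ 0`
leaves the ordinary differential equation `(1 - z w) ∂_z F = α w F` in `z`, whose solutions
on the disk are `F z w = F 0 w (1 - z w)^(-α)`; and the companion equation at `z = 0`
says that `F 0 w` does not depend on `w`.
-/

section

variable {𝕜 E₁ E₂ G : Type*} [NontriviallyNormedField 𝕜] [NormedAddCommGroup E₁]
  [NormedSpace 𝕜 E₁] [NormedAddCommGroup E₂] [NormedSpace 𝕜 E₂] [NormedAddCommGroup G]
  [NormedSpace 𝕜 G] {f : E₁ → E₂ → G} {s : Set E₁} {t : Set E₂}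

theorem DifferentiableOn.uncurry_left (a : E₁) (ha : a ∈ s)
    (h : DifferentiableOn 𝕜 (Function.uncurry f) (s ×ˢ t)) : DifferentiableOn 𝕜 (f a) t :=
  h.comp ((differentiableOn_const a).prodMk differentiableOn_id)
    fun _ hb => Set.mk_mem_prod ha hb

theorem DifferentiableOn.uncurry_right (b : E₂) (hb : b ∈ t)
    (h : DifferentiableOn 𝕜 (Function.uncurry f) (s ×ˢ t)) :
    DifferentiableOn 𝕜 (fun a => f a b) s :=
  h.comp (differentiableOn_id.prodMk (differentiableOn_const b))
    fun _ ha => Set.mk_mem_prod ha hb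

end

lemma one_sub_mul_mem_slitPlane {z w : ℂ} (hz : ‖z‖ < 1) (hw : ‖w‖ ≤ 1) :
    1 - z * w ∈ slitPlane := by
  rw [sub_eq_add_neg]
  refine mem_slitPlane_of_norm_lt_one ?_
  rw [norm_neg, norm_mul]
  nlinarith [norm_nonneg z, norm_nonneg w]

theorem eq_mul_one_sub_mul_cpow_neg_of_deriv {G : ℂ → ℂ} {a c : ℂ} (hc : ‖c‖ ≤ 1)
    (hG : DifferentiableOn ℂ G (ball 0 1))
    (hode : ∀ ζ ∈ ball (0 : ℂ) 1, (1 - ζ * c) * deriv G ζ = a * c * G ζ)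
    {z : ℂ} (hz : z ∈ ball (0 : ℂ) 1) :
    G z = G 0 * (1 - z * c) ^ (-a) := by
  have hslit : ∀ ζ ∈ ball (0 : ℂ) 1, 1 - ζ * c ∈ slitPlane := fun ζ hζ =>
    one_sub_mul_mem_slitPlane (mem_ball_zero_iff.mp hζ) hc
  have hderiv : ∀ ζ ∈ ball (0 : ℂ) 1,
      HasDerivAt (fun ζ => G ζ * (1 - ζ * c) ^ a) 0 ζ := by
    intro ζ hζ
    have hG' := (hG.differentiableAt (isOpen_ball.mem_nhds hζ)).hasDerivAt
    have hpow := ((hasDerivAt_mul_const c).const_sub 1).cpow_const (c := a) (hslit ζ hζ)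
    refine (hG'.mul hpow).congr_deriv ?_
    have hne : 1 - ζ * c ≠ 0 := slitPlane_ne_zero (hslit ζ hζ)
    have hsplit : (1 - ζ * c) ^ a = (1 - ζ * c) ^ (a - 1) * (1 - ζ * c) := by
      rw [cpow_sub _ _ hne, cpow_one, div_mul_cancel₀ _ hne]
    rw [hsplit]
    linear_combination (1 - ζ * c) ^ (a - 1) * hode ζ hζ
  have hconst : G z * (1 - z * c) ^ a = G 0 := by
    simpa using isOpen_ball.is_const_of_deriv_eq_zero (convex_ball (0 : ℂ) 1).isPreconnected
      (fun ζ hζ => (hderiv ζ hζ).differentiableAt.differentiableWithinAt)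
      (fun ζ hζ => (hderiv ζ hζ).deriv) hz (mem_ball_self one_pos)
  have hne : (1 - z * c) ^ a ≠ 0 := cpow_ne_zero_iff.mpr (.inl (slitPlane_ne_zero (hslit z hz)))
  rw [cpow_neg, ← hconst]
  field_simp

def IsHermitianOnBidisk (F : ℂ → ℂ → ℂ) : Prop :=
  ∀ z w : ℂ, ‖z‖ < 1 → ‖w‖ < 1 → F z w = conj (F (conj w) (conj z))

def SolvesKernelPDE (α : ℝ) (F : ℂ → ℂ → ℂ) : Prop :=
  ∀ z w : ℂ, ‖z‖ < 1 → ‖w‖ < 1 →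
    deriv (fun ζ : ℂ => F ζ w) z
      = w ^ 2 * deriv (fun ξ : ℂ => F z ξ) w + (α : ℂ) * w * F z w

namespace IsHermitianOnBidisk

variable {F : ℂ → ℂ → ℂ} {z w : ℂ}

lemma deriv_fst_eq_conj_deriv_snd (hF : IsHermitianOnBidisk F) (hz : ‖z‖ < 1)
    (hw : ‖w‖ < 1) :
    deriv (fun ζ : ℂ => F ζ w) z = conj (deriv (fun ξ : ℂ => F (conj w) ξ) (conj z)) := by
  have hev : (fun ζ : ℂ => F ζ w) =ᶠ[nhds z] conj ∘ F (conj w) ∘ conj := by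
    filter_upwards [isOpen_ball.mem_nhds (mem_ball_zero_iff.mpr hz)] with ζ hζ
    exact hF ζ w (mem_ball_zero_iff.mp hζ) hw
  rw [hev.deriv_eq, deriv_conj_conj]
  rfl

lemma deriv_snd_eq {α : ℝ} (hF : IsHermitianOnBidisk F) (hP : SolvesKernelPDE α F)
    (hz : ‖z‖ < 1) (hw : ‖w‖ < 1) :
    deriv (fun ξ : ℂ => F z ξ) w
      = z ^ 2 * deriv (fun ζ : ℂ => F ζ w) z + (α : ℂ) * z * F z w := by
  have hwc : ‖conj w‖ < 1 := by rwa [norm_conj]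
  have hzc : ‖conj z‖ < 1 := by rwa [norm_conj]
  have hreflected := congrArg conj (hP (conj w) (conj z) hwc hzc)
  rw [hF.deriv_fst_eq_conj_deriv_snd hwc hzc] at hreflected
  simp only [conj_conj, map_add, map_mul, map_pow, conj_ofReal] at hreflected
  rwa [← hF.deriv_fst_eq_conj_deriv_snd hz hw, ← hF z w hz hw] at hreflected

lemma one_sub_mul_mul_deriv_fst {α : ℝ} (hF : IsHermitianOnBidisk F) (hP : SolvesKernelPDE α F)
    (hz : ‖z‖ < 1) (hw : ‖w‖ < 1) :
    (1 - z * w) * deriv (fun ζ : ℂ => F ζ w) z = (α : ℂ) * w * F z w := by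
  have hne : 1 + z * w ≠ 0 := by
    have := slitPlane_ne_zero (one_sub_mul_mem_slitPlane (w := -w) hz (norm_neg w ▸ hw.le))
    rwa [mul_neg, sub_neg_eq_add] at this
  have h := hP z w hz hw
  rw [hF.deriv_snd_eq hP hz hw] at h
  refine mul_left_cancel₀ hne ?_
  linear_combination h

end IsHermitianOnBidisk

theorem halpha_kernel_unique_general (α : ℝ) (F : ℂ → ℂ → ℂ)
    (hA : AnalyticOn ℂ (fun p : ℂ × ℂ => F p.1 p.2)
      (Metric.ball (0 : ℂ) 1 ×ˢ Metric.ball (0 : ℂ) 1))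
    (hSym : ∀ z w : ℂ, ‖z‖ < 1 → ‖w‖ < 1 →
      F z w = conj (F (conj w) (conj z)))
    (hPDE : ∀ z w : ℂ, ‖z‖ < 1 → ‖w‖ < 1 →
      deriv (fun ζ : ℂ => F ζ w) z
        = w ^ 2 * deriv (fun ξ : ℂ => F z ξ) w + (α : ℂ) * w * F z w) :
    (F 0 0).im = 0 ∧
      ∀ z w : ℂ, ‖z‖ < 1 → ‖w‖ < 1 →
        F z w = F 0 0 * (1 - z * w) ^ (-(α : ℂ)) := by
  have hF : IsHermitianOnBidisk F := hSym
  have hdiff := hA.differentiableOn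
  have h0 : (0 : ℂ) ∈ ball (0 : ℂ) 1 := mem_ball_self one_pos
  have hderiv0 : Set.EqOn (deriv (F 0)) 0 (ball 0 1) := fun ξ hξ => by
    simpa using hF.deriv_snd_eq hPDE (mem_ball_zero_iff.mp h0) (mem_ball_zero_iff.mp hξ)
  have hF0 : ∀ w, ‖w‖ < 1 → F 0 w = F 0 0 := fun w hw =>
    isOpen_ball.is_const_of_deriv_eq_zero (convex_ball (0 : ℂ) 1).isPreconnected
      (hdiff.uncurry_left 0 h0) hderiv0 (mem_ball_zero_iff.mpr hw) h0
  refine ⟨?_, fun z w hz hw => ?_⟩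
  · refine conj_eq_iff_im.mp ?_
    simpa using (hF 0 0 (mem_ball_zero_iff.mp h0) (mem_ball_zero_iff.mp h0)).symm
  · rw [← hF0 w hw]
    exact eq_mul_one_sub_mul_cpow_neg_of_deriv hw.le
      (hdiff.uncurry_right w (mem_ball_zero_iff.mpr hw))
      (fun ζ hζ => hF.one_sub_mul_mul_deriv_fst hPDE (mem_ball_zero_iff.mp hζ) hw)
      (mem_ball_zero_iff.mpr hz)

theorem halpha_kernel_unique (α : ℝ) (hα : 1 ≤ α) (F : ℂ → ℂ → ℂ)
    (hA : AnalyticOn ℂ (fun p : ℂ × ℂ => F p.1 p.2)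
      (Metric.ball (0 : ℂ) 1 ×ˢ Metric.ball (0 : ℂ) 1))
    (hSym : ∀ z w : ℂ, ‖z‖ < 1 → ‖w‖ < 1 →
      F z w = conj (F (conj w) (conj z)))
    (hPDE : ∀ z w : ℂ, ‖z‖ < 1 → ‖w‖ < 1 →
      deriv (fun ζ : ℂ => F ζ w) z
        = w ^ 2 * deriv (fun ξ : ℂ => F z ξ) w + (α : ℂ) * w * F z w) :
    (F 0 0).im = 0 ∧
      ∀ z w : ℂ, ‖z‖ < 1 → ‖w‖ < 1 →
        F z w = F 0 0 * (1 - z * w) ^ (-(α : ℂ)) :=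
  halpha_kernel_unique_general α F hA hSym hPDE
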